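/- arXiv:2604.04613 — 4 statements merged into one kernel-verified Lean document; each statement's English description precedes it below -/
import Mathlib

section
/- Let b > 0 and let v : [0,b] → ℝ be continuously differentiable, with radial average ṽ. Then ∫_0^b (ṽ'(r))² dr ≤ (4/9)·∫_0^b (v'(s))² ds, i.e. the L²(0,b)-norm of ṽ' is at most (2/3) times the L²(0,b)-norm of v'. -/
open MeasureTheory intervalIntegral Set

/-!
For `0 < r < b`, an integration by parts and the substitution `t = θ r` give
`ṽ'(r) = ∫₀¹ θ v'(θ r) dθ`. Cauchy–Schwarz with weight `√θ` bounds its square by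
`(2/3) ∫₀¹ θ^{3/2} v'(θ r)² dθ`. Integrating in `r`, swapping the integrals and using
`θ ∫₀ᵇ v'(θ r)² dr = ∫₀^{θ b} v'² ≤ ∫₀ᵇ v'²` leaves the factor `(2/3) ∫₀¹ √θ dθ = 4/9`.
-/

noncomputable def radialAverage (v : ℝ → ℝ) (r : ℝ) : ℝ := (1 / r) * ∫ s in (0:ℝ)..r, v s

theorem hasDerivAt_radialAverage {v : ℝ → ℝ} {r : ℝ} (hr : r ≠ 0)
    (hint : IntervalIntegrable v volume 0 r) (hmeas : StronglyMeasurableAtFilter v (nhds r))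
    (hcont : ContinuousAt v r) :
    HasDerivAt (radialAverage v) ((r * v r - ∫ s in (0:ℝ)..r, v s) / r ^ 2) r := by
  have := (hasDerivAt_inv hr).fun_mul (integral_hasDerivAt_right hint hmeas hcont)
  unfold radialAverage
  simp only [one_div]
  refine this.congr_deriv ?_
  field_simp
  ring

theorem integral_id_mul_comp_mul_eq {w : ℝ → ℝ} {r : ℝ} (hr : r ≠ 0) :
    ∫ θ in (0:ℝ)..1, θ * w (θ * r) = (∫ t in (0:ℝ)..r, t * w t) / r ^ 2 := by
  have hsubst := integral_comp_mul_right (fun t ↦ t * w t) hr (a := 0) (b := 1)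
  have hpull : ∫ θ in (0:ℝ)..1, θ * r * w (θ * r) = r * ∫ θ in (0:ℝ)..1, θ * w (θ * r) := by
    rw [← intervalIntegral.integral_const_mul]
    exact integral_congr fun θ _ ↦ by ring
  simp only [zero_mul, one_mul, smul_eq_mul, hpull, eq_inv_mul_iff_mul_eq₀ hr] at hsubst
  rw [← hsubst, ← mul_assoc, ← sq, mul_div_cancel_left₀ _ (pow_ne_zero 2 hr)]

theorem deriv_radialAverage_eq {b : ℝ} {v w : ℝ → ℝ}
    (hv : ∀ x ∈ Icc 0 b, HasDerivWithinAt v (w x) (Icc 0 b) x) (hw : Continuous w)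
    {r : ℝ} (hr : r ∈ Ioo 0 b) :
    deriv (radialAverage v) r = ∫ θ in (0:ℝ)..1, θ * w (θ * r) := by
  have hsub : uIcc 0 r ⊆ Icc 0 b := by
    rw [uIcc_of_le hr.1.le]; exact Icc_subset_Icc le_rfl hr.2.le
  have hvc : ContinuousOn v (Icc 0 b) := fun x hx ↦ (hv x hx).continuousWithinAt
  have hibp : ∫ t in (0:ℝ)..r, t * w t = r * v r - ∫ t in (0:ℝ)..r, v t := by
    have := integral_mul_deriv_eq_deriv_mul_of_hasDerivWithinAt (u := id) (u' := fun _ ↦ 1)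
      (fun x _ ↦ hasDerivWithinAt_id x _) (fun x hx ↦ (hv x (hsub hx)).mono hsub)
      intervalIntegrable_const (hw.intervalIntegrable 0 r)
    simpa using this
  rw [integral_id_mul_comp_mul_eq hr.1.ne', hibp]
  refine (hasDerivAt_radialAverage hr.1.ne' ((hvc.mono hsub).intervalIntegrable) ?_ ?_).deriv
  · exact (hvc.mono Ioo_subset_Icc_self).stronglyMeasurableAtFilter isOpen_Ioo r hr
  · exact hvc.continuousAt (Icc_mem_nhds hr.1 hr.2)

theorem sq_integral_mul_le_integral_mul_integral_mul_sq {α : Type*} [MeasurableSpace α]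
    {μ : Measure α} {p q : α → ℝ} (hp : 0 ≤ᵐ[μ] p) (hp_int : Integrable p μ)
    (hpq : Integrable (fun x ↦ p x * q x) μ) (hpq2 : Integrable (fun x ↦ p x * q x ^ 2) μ) :
    (∫ x, p x * q x ∂μ) ^ 2 ≤ (∫ x, p x ∂μ) * ∫ x, p x * q x ^ 2 ∂μ := by
  have hquad : ∀ c : ℝ, 0 ≤ (∫ x, p x ∂μ) * (c * c) + (-2 * ∫ x, p x * q x ∂μ) * c
      + ∫ x, p x * q x ^ 2 ∂μ := by
    intro c
    have hexp : ∫ x, p x * (q x - c) ^ 2 ∂μ = ∫ x, (c * c * p x + -2 * c * (p x * q x)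
        + p x * q x ^ 2) ∂μ := integral_congr_ae (ae_of_all _ fun x ↦ by ring)
    have hlin : Integrable (fun x ↦ c * c * p x + -2 * c * (p x * q x)) μ :=
      (hp_int.const_mul _).add (hpq.const_mul _)
    rw [integral_add hlin hpq2,
      integral_add (hp_int.const_mul _) (hpq.const_mul _), MeasureTheory.integral_const_mul,
      MeasureTheory.integral_const_mul] at hexp
    have := integral_nonneg_of_ae (μ := μ) (f := fun x ↦ p x * (q x - c) ^ 2)
      (hp.mono fun x hx ↦ mul_nonneg hx (sq_nonneg _))
    linarith
  have := discrim_le_zero hquad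
  rw [discrim] at this
  linarith

theorem integral_sqrt_zero_one : ∫ θ in (0:ℝ)..1, √θ = 2 / 3 := by
  simp_rw [Real.sqrt_eq_rpow]
  rw [integral_rpow (Or.inl (by norm_num))]
  norm_num

theorem sq_integral_zero_one_id_mul_le {f : ℝ → ℝ} (hf : Continuous f) :
    (∫ θ in (0:ℝ)..1, θ * f θ) ^ 2 ≤ 2 / 3 * ∫ θ in (0:ℝ)..1, θ * √θ * f θ ^ 2 := by
  have hcs := sq_integral_mul_le_integral_mul_integral_mul_sq (μ := volume.restrict (Ioc 0 1))
    (p := fun θ ↦ √θ) (q := fun θ ↦ √θ * f θ) (ae_of_all _ fun θ ↦ Real.sqrt_nonneg θ)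
    (by fun_prop : Continuous _).integrableOn_Ioc (by fun_prop : Continuous _).integrableOn_Ioc
    (by fun_prop : Continuous _).integrableOn_Ioc
  simp only [← integral_of_le zero_le_one, integral_sqrt_zero_one] at hcs
  have h1 : ∫ θ in (0:ℝ)..1, √θ * (√θ * f θ) = ∫ θ in (0:ℝ)..1, θ * f θ :=
    integral_congr fun θ hθ ↦ by
      rw [uIcc_of_le zero_le_one] at hθ
      simp only [← mul_assoc, Real.mul_self_sqrt hθ.1]
  have h2 : ∫ θ in (0:ℝ)..1, √θ * (√θ * f θ) ^ 2 = ∫ θ in (0:ℝ)..1, θ * √θ * f θ ^ 2 :=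
    integral_congr fun θ hθ ↦ by
      rw [uIcc_of_le zero_le_one] at hθ
      rw [mul_pow, Real.sq_sqrt hθ.1]; ring
  rwa [h1, h2] at hcs

theorem mul_integral_comp_mul_le {f : ℝ → ℝ} (hf : 0 ≤ f) {b c : ℝ} (hb : 0 ≤ b)
    (hc : c ∈ Icc (0:ℝ) 1) (hfi : IntervalIntegrable f volume 0 b) :
    c * ∫ x in (0:ℝ)..b, f (c * x) ≤ ∫ x in (0:ℝ)..b, f x := by
  rw [← smul_eq_mul, smul_integral_comp_mul_left, mul_zero]
  exact integral_mono_interval le_rfl (mul_nonneg hc.1 hb) (mul_le_of_le_one_left hb hc.2)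
    (ae_of_all _ hf) hfi

theorem integral_sq_integral_id_mul_comp_mul_le {w : ℝ → ℝ} (hw : Continuous w) {b : ℝ}
    (hb : 0 ≤ b) :
    ∫ r in (0:ℝ)..b, (∫ θ in (0:ℝ)..1, θ * w (θ * r)) ^ 2
      ≤ 4 / 9 * ∫ r in (0:ℝ)..b, w r ^ 2 := by
  set J := ∫ r in (0:ℝ)..b, w r ^ 2
  have hswap : IntegrableOn (Function.uncurry fun r θ : ℝ ↦ θ * √θ * w (θ * r) ^ 2)
      (uIoc 0 b ×ˢ uIoc 0 1) :=
    (by fun_prop : Continuous _).continuousOn.integrableOn_compact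
      (isCompact_uIcc.prod isCompact_uIcc)
      |>.mono_set (prod_mono uIoc_subset_uIcc uIoc_subset_uIcc)
  have hscale : ∀ θ ∈ Icc (0:ℝ) 1, θ * √θ * ∫ r in (0:ℝ)..b, w (θ * r) ^ 2 ≤ √θ * J :=
    fun θ hθ ↦ by
      rw [mul_comm θ, mul_assoc]
      refine mul_le_mul_of_nonneg_left ?_ (Real.sqrt_nonneg θ)
      exact mul_integral_comp_mul_le (fun x ↦ sq_nonneg (w x)) hb hθ
        ((by fun_prop : Continuous _).intervalIntegrable _ _)
  calc ∫ r in (0:ℝ)..b, (∫ θ in (0:ℝ)..1, θ * w (θ * r)) ^ 2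
      ≤ ∫ r in (0:ℝ)..b, 2 / 3 * ∫ θ in (0:ℝ)..1, θ * √θ * w (θ * r) ^ 2 :=
        integral_mono_on hb ((by fun_prop : Continuous _).intervalIntegrable _ _)
          ((by fun_prop : Continuous _).intervalIntegrable _ _)
          fun r _ ↦ sq_integral_zero_one_id_mul_le (by fun_prop)
    _ = 2 / 3 * ∫ θ in (0:ℝ)..1, θ * √θ * ∫ r in (0:ℝ)..b, w (θ * r) ^ 2 := by
        rw [intervalIntegral.integral_const_mul, intervalIntegral_intervalIntegral_swap hswap]
        simp_rw [intervalIntegral.integral_const_mul]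
    _ ≤ 2 / 3 * ∫ θ in (0:ℝ)..1, √θ * J := by
        gcongr
        exact integral_mono_on zero_le_one ((by fun_prop : Continuous _).intervalIntegrable _ _)
          ((by fun_prop : Continuous _).intervalIntegrable _ _) hscale
    _ = 4 / 9 * J := by
        rw [intervalIntegral.integral_mul_const, integral_sqrt_zero_one]
        ring

/-- L² bound on the derivative of the radial average:
`∫_0^b (ṽ'(r))² dr ≤ (4/9) ∫_0^b (v'(s))² ds` for `v ∈ C¹([0,b])`,
where `ṽ(r) = (1/r)∫_0^r v`. -/
theorem stmt4 (b : ℝ) (hb : 0 < b) (v v' : ℝ → ℝ)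
    (hv : ∀ x ∈ Set.Icc 0 b, HasDerivWithinAt v (v' x) (Set.Icc 0 b) x)
    (hv' : ContinuousOn v' (Set.Icc 0 b)) :
    ∫ r in (0:ℝ)..b, (deriv (fun x => (1 / x) * ∫ s in (0:ℝ)..x, v s) r) ^ 2
      ≤ (4 / 9) * ∫ s in (0:ℝ)..b, (v' s) ^ 2 := by
  obtain ⟨w, hw, hwv⟩ : ∃ w, Continuous w ∧ EqOn w v' (Icc 0 b) :=
    ⟨IccExtend hb.le ((Icc 0 b).domRestrict v'), continuous_IccExtend_iff.2 hv'.domRestrict,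
      fun x hx ↦ IccExtend_of_mem _ _ hx⟩
  have hvw : ∀ x ∈ Icc 0 b, HasDerivWithinAt v (w x) (Icc 0 b) x :=
    fun x hx ↦ hwv hx ▸ hv x hx
  calc ∫ r in (0:ℝ)..b, (deriv (radialAverage v) r) ^ 2
      = ∫ r in (0:ℝ)..b, (∫ θ in (0:ℝ)..1, θ * w (θ * r)) ^ 2 := by
        refine integral_congr_ae ?_
        filter_upwards [Measure.ae_ne volume b] with r hrb hr
        rw [uIoc_of_le hb.le] at hr
        rw [deriv_radialAverage_eq hvw hw ⟨hr.1, hr.2.lt_of_ne hrb⟩]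
    _ ≤ 4 / 9 * ∫ r in (0:ℝ)..b, w r ^ 2 := integral_sq_integral_id_mul_comp_mul_le hw hb.le
    _ = 4 / 9 * ∫ s in (0:ℝ)..b, v' s ^ 2 := by
        congr 1
        refine integral_congr fun s hs ↦ ?_
        rw [uIcc_of_le hb.le] at hs
        simp only [hwv hs]
end

section
/- Let b > 0, L ≥ 0, and let α, β : (0,b] → ℝ be continuous with |α(r)| ≤ L·r and |β(r)| ≤ L·r for all r ∈ (0,b]. Define G_α(r) := exp(−∫_r^b α(s)²/s ds) and G_β(r) := exp(−∫_r^b β(s)²/s ds). Then for every r ∈ (0,b]: |G_α(r) − G_β(r)| ≤ 2L·∫_0^b |α(s) − β(s)| ds. -/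
/-!
Since `x ↦ exp (-x)` is 1-Lipschitz on `[0, ∞)` and both exponents are nonnegative, it suffices
to compare the exponents. Pointwise, `|α² - β²| / s = |α + β| |α - β| / s ≤ 2L |α - β|`, because
`|α + β| ≤ 2Ls`; integrating over `[r, b] ⊆ (0, b]` gives the bound.
-/

open MeasureTheory intervalIntegral Set Real

lemma abs_exp_neg_sub_exp_neg_le {x y : ℝ} (hx : 0 ≤ x) (hy : 0 ≤ y) :
    |exp (-x) - exp (-y)| ≤ |x - y| := by
  wlog hxy : x ≤ y generalizing x y
  · rw [abs_sub_comm, abs_sub_comm x]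
    exact this hy hx (le_of_not_ge hxy)
  have hfactor : exp (-x) - exp (-y) = exp (-x) * (1 - exp (-(y - x))) := by
    rw [mul_sub, ← exp_add]; ring_nf
  rw [abs_of_nonneg (sub_nonneg.2 (exp_le_exp.2 (neg_le_neg hxy))),
    abs_of_nonpos (sub_nonpos.2 hxy), hfactor]
  calc exp (-x) * (1 - exp (-(y - x))) ≤ 1 * (y - x) :=
        mul_le_mul (exp_le_one_iff.2 (neg_nonpos.2 hx)) (by linarith [one_sub_le_exp_neg (y - x)])
          (by linarith [exp_le_one_iff.2 (neg_nonpos.2 (sub_nonneg.2 hxy))]) zero_le_one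
    _ = -(x - y) := by ring

lemma abs_sq_div_sub_sq_div_le {a b s L : ℝ} (hs : 0 < s) (ha : |a| ≤ L * s) (hb : |b| ≤ L * s) :
    |a ^ 2 / s - b ^ 2 / s| ≤ 2 * L * |a - b| := by
  rw [div_sub_div_same, abs_div, abs_of_pos hs, div_le_iff₀ hs, sq_sub_sq, abs_mul]
  calc |a + b| * |a - b| ≤ (2 * L * s) * |a - b| := by
        gcongr
        linarith [abs_add_le a b]
    _ = 2 * L * |a - b| * s := by ring

lemma ContinuousOn.intervalIntegrable_of_norm_le {E : Type*} [NormedAddCommGroup E] {f : ℝ → E}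
    {a b C : ℝ} (hab : a ≤ b) (hf : ContinuousOn f (Ioc a b)) (hC : ∀ x ∈ Ioc a b, ‖f x‖ ≤ C) :
    IntervalIntegrable f volume a b :=
  (intervalIntegrable_iff_integrableOn_Ioc_of_le hab).2 <|
    IntegrableOn.of_bound measure_Ioc_lt_top (hf.aestronglyMeasurable measurableSet_Ioc) C
      ((ae_restrict_iff' measurableSet_Ioc).2 (ae_of_all _ hC))

section

variable {f g : ℝ → ℝ} {r b : ℝ}

lemma integral_sq_div_nonneg (hr : 0 < r) (hrb : r ≤ b) : 0 ≤ ∫ s in r..b, f s ^ 2 / s :=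
  integral_nonneg hrb fun _ hs => div_nonneg (sq_nonneg _) (hr.le.trans hs.1)

lemma ContinuousOn.intervalIntegrable_sq_div (hr : 0 < r) (hrb : r ≤ b)
    (hf : ContinuousOn f (Icc r b)) : IntervalIntegrable (fun s => f s ^ 2 / s) volume r b :=
  ContinuousOn.intervalIntegrable_of_Icc hrb <|
    (hf.pow 2).div continuousOn_id fun _ hs => (hr.trans_le hs.1).ne'

lemma abs_integral_sq_div_sub_le {L : ℝ} (hr : 0 < r) (hrb : r ≤ b)
    (hf : ContinuousOn f (Icc r b)) (hg : ContinuousOn g (Icc r b))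
    (hfL : ∀ s ∈ Icc r b, |f s| ≤ L * s) (hgL : ∀ s ∈ Icc r b, |g s| ≤ L * s) :
    |(∫ s in r..b, f s ^ 2 / s) - ∫ s in r..b, g s ^ 2 / s| ≤ 2 * L * ∫ s in r..b, |f s - g s| := by
  rw [← integral_sub (hf.intervalIntegrable_sq_div hr hrb) (hg.intervalIntegrable_sq_div hr hrb),
    ← intervalIntegral.integral_const_mul]
  refine (abs_integral_le_integral_abs hrb).trans <| integral_mono_on hrb
    ((hf.intervalIntegrable_sq_div hr hrb).sub (hg.intervalIntegrable_sq_div hr hrb)).abs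
    ((ContinuousOn.intervalIntegrable_of_Icc hrb (hf.sub hg).abs).const_mul _)
    fun s hs => abs_sq_div_sub_sq_div_le (hr.trans_le hs.1) (hfL s hs) (hgL s hs)

end

theorem stmt10_general (b L : ℝ) (hL : 0 ≤ L) (α β : ℝ → ℝ)
    (hαc : ContinuousOn α (Set.Ioc 0 b)) (hβc : ContinuousOn β (Set.Ioc 0 b))
    (hαb : ∀ r ∈ Set.Ioc 0 b, |α r| ≤ L * r)
    (hβb : ∀ r ∈ Set.Ioc 0 b, |β r| ≤ L * r) :
    ∀ r ∈ Set.Ioc 0 b,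
      |Real.exp (-(∫ s in r..b, (α s) ^ 2 / s)) -
        Real.exp (-(∫ s in r..b, (β s) ^ 2 / s))|
        ≤ 2 * L * ∫ s in (0:ℝ)..b, |α s - β s| := by
  rintro r ⟨hr, hrb⟩
  have hsub : Icc r b ⊆ Ioc 0 b := fun s hs => ⟨hr.trans_le hs.1, hs.2⟩
  have hbounded {γ : ℝ → ℝ} (hγ : ∀ r ∈ Ioc 0 b, |γ r| ≤ L * r) : ∀ s ∈ Ioc 0 b, ‖γ s‖ ≤ L * b :=
    fun s hs => (hγ s hs).trans (mul_le_mul_of_nonneg_left hs.2 hL)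
  have hint : IntervalIntegrable (fun s => |α s - β s|) volume 0 b :=
    ((hαc.intervalIntegrable_of_norm_le (hr.le.trans hrb) (hbounded hαb)).sub
      (hβc.intervalIntegrable_of_norm_le (hr.le.trans hrb) (hbounded hβb))).abs
  calc _ ≤ |(∫ s in r..b, α s ^ 2 / s) - ∫ s in r..b, β s ^ 2 / s| :=
        abs_exp_neg_sub_exp_neg_le (integral_sq_div_nonneg hr hrb) (integral_sq_div_nonneg hr hrb)
    _ ≤ 2 * L * ∫ s in r..b, |α s - β s| :=
        abs_integral_sq_div_sub_le hr hrb (hαc.mono hsub) (hβc.mono hsub)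
          (fun s hs => hαb s (hsub hs)) (fun s hs => hβb s (hsub hs))
    _ ≤ 2 * L * ∫ s in (0:ℝ)..b, |α s - β s| := by
        gcongr
        exact integral_mono_interval hr.le hrb le_rfl
          (ae_of_all _ fun _ => abs_nonneg _) hint

/-- Lipschitz stability of the exponential metric reconstruction:
for `|α(r)|, |β(r)| ≤ L r` on `(0,b]` and `G_α(r) = exp(-∫_r^b α²/s ds)`,
`|G_α(r) - G_β(r)| ≤ 2L ∫_0^b |α - β|`. -/
theorem stmt10 (b L : ℝ) (hb : 0 < b) (hL : 0 ≤ L) (α β : ℝ → ℝ)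
    (hαc : ContinuousOn α (Set.Ioc 0 b)) (hβc : ContinuousOn β (Set.Ioc 0 b))
    (hαb : ∀ r ∈ Set.Ioc 0 b, |α r| ≤ L * r)
    (hβb : ∀ r ∈ Set.Ioc 0 b, |β r| ≤ L * r) :
    ∀ r ∈ Set.Ioc 0 b,
      |Real.exp (-(∫ s in r..b, (α s) ^ 2 / s)) -
        Real.exp (-(∫ s in r..b, (β s) ^ 2 / s))|
        ≤ 2 * L * ∫ s in (0:ℝ)..b, |α s - β s| :=
  stmt10_general b L hL α β hαc hβc hαb hβb
end

section
/- Let k ≥ 0 be an integer, let a < c be real numbers, and let u : [a,c] → ℝ be continuous. Then there exists a unique real polynomial p of degree at most k such that p(a) = u(a) and ∫_a^c (u(s) − p(s))·s^j ds = 0 for every integer 0 ≤ j ≤ k − 1. -/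
/-!
If a polynomial `p` of degree at most `k` vanishes at `a` and is orthogonal to all polynomials of
degree `< k`, then `p = (X - a) q` with `deg q < k`, so `0 = ∫_a^c p q = ∫_a^c (s - a) q(s)² ds`,
whose integrand is nonnegative on `[a, c]`; hence `q = 0`. Thus the linear map
`p ↦ (p(a), (∫_a^c p(s) sʲ ds)_{j < k})` is injective on the `(k + 1)`-dimensional space of
polynomials of degree at most `k`, hence bijective onto `ℝ × ℝᵏ`.
-/

open MeasureTheory intervalIntegral Polynomial

namespace Polynomial

variable {a c : ℝ}

lemma intervalIntegrable_eval_mul_pow (p : ℝ[X]) (j : ℕ) (a c : ℝ) :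
    IntervalIntegrable (fun s => p.eval s * s ^ j) volume a c :=
  (p.continuous.mul (continuous_pow j)).intervalIntegrable a c

noncomputable def momentFunctional (a c : ℝ) (j : ℕ) : ℝ[X] →ₗ[ℝ] ℝ where
  toFun p := ∫ s in a..c, p.eval s * s ^ j
  map_add' p q := by
    simp only [eval_add, add_mul]
    exact integral_add (intervalIntegrable_eval_mul_pow p j a c)
      (intervalIntegrable_eval_mul_pow q j a c)
  map_smul' r p := by
    simp only [eval_smul, smul_eq_mul, RingHom.id_apply, mul_assoc]
    exact intervalIntegral.integral_const_mul r _

lemma integral_eval_mul_eq_zero_of_natDegree_lt {k : ℕ} {p r : ℝ[X]}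
    (hp : ∀ j < k, ∫ s in a..c, p.eval s * s ^ j = 0) (hr : r.natDegree < k) :
    ∫ s in a..c, p.eval s * r.eval s = 0 := by
  have hexpand : ∀ s : ℝ, p.eval s * r.eval s
      = ∑ i ∈ Finset.range k, r.coeff i * (p.eval s * s ^ i) := fun s => by
    rw [eval_eq_sum_range' hr s, Finset.mul_sum]
    exact Finset.sum_congr rfl fun i _ => by ring
  simp only [hexpand]
  rw [integral_finsetSum fun i _ => (intervalIntegrable_eval_mul_pow p i a c).const_mul _]
  refine Finset.sum_eq_zero fun i hi => ?_
  rw [intervalIntegral.integral_const_mul, hp i (Finset.mem_range.mp hi), mul_zero]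

lemma integral_sub_mul_sq_eval_pos (hac : a < c) {q : ℝ[X]} (hq : q ≠ 0) :
    0 < ∫ s in a..c, (s - a) * q.eval s ^ 2 := by
  obtain ⟨t, ht, hqt⟩ := (Set.Ioo_infinite hac).exists_notMem_finset q.roots.toFinset
  have hqt : q.eval t ≠ 0 := fun h => hqt (by simpa [hq] using h)
  refine integral_pos hac (by fun_prop) (fun s hs => ?_) ⟨t, Set.Ioo_subset_Icc_self ht, ?_⟩
  · have : 0 ≤ s - a := by linarith [hs.1]
    positivity
  · have : 0 < t - a := by linarith [ht.1]
    positivity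

theorem eq_zero_of_eval_eq_zero_of_moments_eq_zero (hac : a < c) {k : ℕ} {p : ℝ[X]}
    (hdeg : p.natDegree ≤ k) (ha : p.eval a = 0)
    (hmom : ∀ j < k, ∫ s in a..c, p.eval s * s ^ j = 0) : p = 0 := by
  set q := p /ₘ (X - C a)
  have hpq : (X - C a) * q = p := mul_divByMonic_eq_iff_isRoot.mpr ha
  by_contra hp
  have hq : q ≠ 0 := by rintro hq; simp [hq, eq_comm, hp] at hpq
  have hqdeg : q.natDegree < k := by
    have := natDegree_mul (X_sub_C_ne_zero a) hq
    rw [hpq, natDegree_X_sub_C] at this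
    omega
  have hpos := integral_sub_mul_sq_eval_pos hac hq
  have hintegrand : ∀ s, p.eval s * q.eval s = (s - a) * q.eval s ^ 2 := fun s => by
    rw [← hpq]; simp only [eval_mul, eval_sub, eval_X, eval_C]; ring
  simp only [← hintegrand, integral_eval_mul_eq_zero_of_natDegree_lt hmom hqdeg] at hpos
  exact hpos.false

noncomputable def gaussRadauMap (a c : ℝ) (k : ℕ) : ℝ[X] →ₗ[ℝ] ℝ × (Fin k → ℝ) :=
  (leval a).prod (LinearMap.pi fun j : Fin k => momentFunctional a c j)

lemma gaussRadauMap_apply (a c : ℝ) (k : ℕ) (p : ℝ[X]) :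
    gaussRadauMap a c k p = (p.eval a, fun j : Fin k => ∫ s in a..c, p.eval s * s ^ (j : ℕ)) :=
  rfl

lemma mem_degreeLT_succ_iff_natDegree_le {k : ℕ} {p : ℝ[X]} :
    p ∈ degreeLT ℝ (k + 1) ↔ p.natDegree ≤ k := by
  rw [degreeLT_succ_eq_degreeLE, mem_degreeLE, natDegree_le_iff_degree_le]

theorem bijective_gaussRadauMap_domRestrict (hac : a < c) (k : ℕ) :
    Function.Bijective ((gaussRadauMap a c k).domRestrict (degreeLT ℝ (k + 1))) := by
  have := (degreeLTEquiv ℝ (k + 1)).symm.finiteDimensional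
  have hinj : Function.Injective ((gaussRadauMap a c k).domRestrict (degreeLT ℝ (k + 1))) := by
    rw [← LinearMap.ker_eq_bot, LinearMap.ker_eq_bot']
    rintro ⟨p, hp⟩ hzero
    simp only [LinearMap.domRestrict_apply, gaussRadauMap_apply, Prod.mk_eq_zero, funext_iff,
      Fin.forall_iff] at hzero
    exact Subtype.ext <| eq_zero_of_eval_eq_zero_of_moments_eq_zero hac
      (mem_degreeLT_succ_iff_natDegree_le.mp hp) hzero.1 hzero.2
  refine ⟨hinj, (LinearMap.injective_iff_surjective_of_finrank_eq_finrank ?_).mp hinj⟩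
  rw [(degreeLTEquiv ℝ (k + 1)).finrank_eq]
  simp [add_comm]

lemma gaussRadauMap_eq_iff {k : ℕ} {u : ℝ → ℝ}
    (hu : ∀ j : ℕ, IntervalIntegrable (fun s => u s * s ^ j) volume a c) (p : ℝ[X]) :
    gaussRadauMap a c k p = (u a, fun j : Fin k => ∫ s in a..c, u s * s ^ (j : ℕ)) ↔
      p.eval a = u a ∧ ∀ j < k, ∫ s in a..c, (u s - p.eval s) * s ^ j = 0 := by
  rw [gaussRadauMap_apply, Prod.mk.injEq, funext_iff, Fin.forall_iff]
  have hmoment : ∀ j : ℕ, ∫ s in a..c, (u s - p.eval s) * s ^ j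
      = (∫ s in a..c, u s * s ^ j) - ∫ s in a..c, p.eval s * s ^ j := fun j => by
    simp only [sub_mul]
    exact integral_sub (hu j) (intervalIntegrable_eval_mul_pow p j a c)
  simp only [hmoment, sub_eq_zero, eq_comm (b := ∫ s in a..c, p.eval s * s ^ _)]

end Polynomial

/-- Well-posedness of the (left) Gauss--Radau projection: for continuous `u` on `[a,c]`
there is a unique polynomial `p` of degree at most `k` with `p(a) = u(a)` and
`∫_a^c (u - p) s^j ds = 0` for all `0 ≤ j ≤ k - 1` (i.e. `j < k`). -/
theorem stmt15 (k : ℕ) (a c : ℝ) (hac : a < c) (u : ℝ → ℝ)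
    (hu : ContinuousOn u (Set.Icc a c)) :
    ∃! p : Polynomial ℝ, p.natDegree ≤ k ∧ p.eval a = u a ∧
      ∀ j < k, (∫ s in a..c, (u s - p.eval s) * s ^ j) = 0 := by
  have hint (j : ℕ) : IntervalIntegrable (fun s => u s * s ^ j) volume a c :=
    (hu.mul (continuous_pow j).continuousOn).intervalIntegrable_of_Icc hac.le
  obtain ⟨hinj, hsurj⟩ := bijective_gaussRadauMap_domRestrict hac k
  obtain ⟨⟨p, hp⟩, hpu⟩ := hsurj (u a, fun j : Fin k => ∫ s in a..c, u s * s ^ (j : ℕ))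
  refine ⟨p, ⟨mem_degreeLT_succ_iff_natDegree_le.mp hp, (gaussRadauMap_eq_iff hint p).mp hpu⟩, ?_⟩
  rintro q ⟨hq, hqu⟩
  have hqp : gaussRadauMap a c k q = gaussRadauMap a c k p :=
    ((gaussRadauMap_eq_iff hint q).mpr hqu).trans hpu.symm
  exact congrArg Subtype.val
    (hinj (a₁ := ⟨q, mem_degreeLT_succ_iff_natDegree_le.mpr hq⟩) (a₂ := ⟨p, hp⟩) hqp)
end

section
/- For every integer k ≥ 0 there exists a constant C > 0 such that for all real numbers a < c with h := c − a and every (k+1)-times continuously differentiable function u : [a,c] → ℝ, the Gauss–Radau projection p of u (the unique polynomial of degree at most k with p(a) = u(a) and ∫_a^c (u − p)·s^j ds = 0 for 0 ≤ j ≤ k − 1) satisfies (∫_a^c (u(s) − p(s))² ds)^{1/2} ≤ C·h^{k+1}·(∫_a^c (u^{(k+1)}(s))² ds)^{1/2}. -/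
/-!
Taylor's formula with integral remainder gives a polynomial `T` of degree `≤ k` with
`T(a) = u(a)` and `|u - T| ≤ h^k ∫ |u^{(k+1)}|` on `[a, c]`. The polynomial `r = T - p` vanishes
at `a`, and against polynomials of degree `< k` it has the same moments as `T - u`. On `[0, 1]`
the data `r(0)`, `∫ r t^j` (`j < k`) determine a polynomial of degree `≤ k` (if they vanish then
`r = t Q` with `∫ t Q² = 0`), so by finite-dimensionality and rescaling `|r| ≤ M sup |u - T|` with
`M` depending only on `k`. Cauchy–Schwarz turns the resulting sup bound into the `L²` bound.
-/

open intervalIntegral Polynomial Set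

theorem sq_integral_abs_le {g : ℝ → ℝ} {a b : ℝ} (hab : a ≤ b) (hg : ContinuousOn g (Icc a b)) :
    (∫ t in a..b, |g t|) ^ 2 ≤ (b - a) * ∫ t in a..b, g t ^ 2 := by
  rcases hab.eq_or_lt with rfl | hlt
  · simp
  rw [← uIcc_of_le hab] at hg
  set I := ∫ t in a..b, |g t|
  set m := I / (b - a)
  have amgm : ∫ t in a..b, 2 * m * |g t| ≤ ∫ t in a..b, (m ^ 2 + g t ^ 2) :=
    integral_mono_on hab (hg.abs.intervalIntegrable.const_mul _)
      (intervalIntegrable_const.add (hg.pow 2).intervalIntegrable) fun t _ => by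
        nlinarith [sq_abs (g t), sq_nonneg (m - |g t|)]
  rw [integral_const_mul, integral_add (f := fun _ => m ^ 2) (g := fun t => g t ^ 2)
    intervalIntegrable_const (hg.pow 2).intervalIntegrable, integral_const, smul_eq_mul] at amgm
  have hm : m * (b - a) = I := div_mul_cancel₀ _ (sub_pos.2 hlt).ne'
  nlinarith

theorem integral_sq_le_of_abs_le {f : ℝ → ℝ} {a b B : ℝ} (hab : a ≤ b)
    (hB : ∀ t ∈ Icc a b, |f t| ≤ B) :
    ∫ t in a..b, f t ^ 2 ≤ (b - a) * B ^ 2 := by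
  have hbound : ∀ t ∈ uIoc a b, ‖f t ^ 2‖ ≤ B ^ 2 := fun t ht => by
    rw [Real.norm_eq_abs, abs_pow]
    exact pow_le_pow_left₀ (abs_nonneg _) (hB t (Ioc_subset_Icc_self (uIoc_of_le hab ▸ ht))) 2
  have := norm_integral_le_of_norm_le_const hbound
  rw [abs_of_nonneg (sub_nonneg.2 hab), mul_comm] at this
  exact (le_abs_self _).trans this

theorem abs_integral_mul_le_of_abs_le {f g : ℝ → ℝ} {a b B : ℝ} (hab : a ≤ b)
    (hf : ∀ t ∈ Icc a b, |f t| ≤ B) (hg : ∀ t ∈ Icc a b, |g t| ≤ 1) :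
    |∫ t in a..b, f t * g t| ≤ (b - a) * B := by
  have hB : 0 ≤ B := (abs_nonneg _).trans (hf a (left_mem_Icc.2 hab))
  have hbound : ∀ t ∈ uIoc a b, ‖f t * g t‖ ≤ B := fun t ht => by
    have ht : t ∈ Icc a b := Ioc_subset_Icc_self (uIoc_of_le hab ▸ ht)
    rw [Real.norm_eq_abs, abs_mul]
    exact (mul_le_mul (hf t ht) (hg t ht) (abs_nonneg _) hB).trans_eq (mul_one B)
  have := norm_integral_le_of_norm_le_const hbound
  rwa [abs_of_nonneg (sub_nonneg.2 hab), mul_comm] at this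

theorem exists_polynomial_eval_eq_taylorWithinEval (f : ℝ → ℝ) (n : ℕ) (s : Set ℝ) (x₀ : ℝ) :
    ∃ T : ℝ[X], T.natDegree ≤ n ∧ ∀ x, T.eval x = taylorWithinEval f n s x₀ x := by
  refine ⟨∑ i ∈ Finset.range (n + 1),
    C (taylorCoeffWithin f i s x₀) * (X - C x₀) ^ i, ?_, fun x => ?_⟩
  · refine natDegree_sum_le_of_forall_le _ _ fun i hi => (natDegree_C_mul_le _ _).trans ?_
    refine (natDegree_pow_le_of_le i (natDegree_X_sub_C_le _)).trans ?_
    have := Finset.mem_range.1 hi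
    omega
  · simp only [taylor_within_apply, eval_finsetSum, taylorCoeffWithin, eval_mul, eval_C, eval_pow,
      eval_sub, eval_X, smul_eq_mul]
    exact Finset.sum_congr rfl fun i _ => by ring

theorem iteratedDerivWithin_subset {f : ℝ → ℝ} {s t : Set ℝ} {n : ℕ} {x : ℝ} (st : s ⊆ t)
    (hs : UniqueDiffOn ℝ s) (ht : UniqueDiffOn ℝ t) (h : ContDiffOn ℝ n f t) (hx : x ∈ s) :
    iteratedDerivWithin n f s x = iteratedDerivWithin n f t x := by
  rw [iteratedDerivWithin, iteratedDerivWithin, iteratedFDerivWithin_subset st hs ht h hx]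

open Nat in
theorem taylor_integral_remainder_Icc {f : ℝ → ℝ} {a b x : ℝ} {n : ℕ} (hab : a < b)
    (hf : ContDiffOn ℝ (n + 1) f (Icc a b)) (hx : x ∈ Icc a b) :
    f x - taylorWithinEval f n (Icc a b) a x =
      ∫ t in a..x, (x - t) ^ n / n ! * iteratedDerivWithin (n + 1) f (Icc a b) t := by
  rcases hx.1.eq_or_lt with rfl | hax
  · simp [taylorWithinEval_self]
  have hsub : Icc a x ⊆ Icc a b := Icc_subset_Icc_right hx.2
  have hD : ∀ m ≤ n + 1, ∀ t ∈ Icc a x,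
      iteratedDerivWithin m f (Icc a x) t = iteratedDerivWithin m f (Icc a b) t :=
    fun m hm t ht => iteratedDerivWithin_subset hsub (uniqueDiffOn_Icc hax)
      (uniqueDiffOn_Icc hab) (hf.of_le (by exact_mod_cast hm)) ht
  have hT : taylorWithinEval f n (Icc a b) a x = taylorWithinEval f n (Icc a x) a x := by
    simp only [taylor_within_apply]
    exact Finset.sum_congr rfl fun i hi => by
      rw [hD i (by have := Finset.mem_range.1 hi; omega) a (left_mem_Icc.2 hax.le)]
  rw [hT, ← uIcc_of_le hax.le, taylor_integral_remainder
    (by rw [uIcc_of_le hax.le]; exact_mod_cast hf.mono hsub)]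
  refine integral_congr fun t ht => ?_
  rw [smul_eq_mul, uIcc_of_le hax.le, hD (n + 1) le_rfl t (by rwa [uIcc_of_le hax.le] at ht)]

open Nat in
theorem abs_sub_taylorWithinEval_le {f : ℝ → ℝ} {a b x : ℝ} {n : ℕ} (hab : a < b)
    (hf : ContDiffOn ℝ (n + 1) f (Icc a b)) (hx : x ∈ Icc a b) :
    |f x - taylorWithinEval f n (Icc a b) a x|
      ≤ (b - a) ^ n * ∫ t in a..b, |iteratedDerivWithin (n + 1) f (Icc a b) t| := by
  set D := iteratedDerivWithin (n + 1) f (Icc a b)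
  have hD : ContinuousOn D (Icc a b) :=
    hf.continuousOn_iteratedDerivWithin le_rfl (uniqueDiffOn_Icc hab)
  have hDx : ContinuousOn D (uIcc a x) := by
    rw [uIcc_of_le hx.1]; exact hD.mono (Icc_subset_Icc_right hx.2)
  have hkernel : ∀ t ∈ Icc a x, |(x - t) ^ n / n !| ≤ (b - a) ^ n := fun t ht => by
    have hxt : 0 ≤ x - t := sub_nonneg.2 ht.2
    rw [abs_div, abs_of_pos (by positivity : (0 : ℝ) < n !), abs_pow, abs_of_nonneg hxt]
    exact (_root_.div_le_self (by positivity) (by exact_mod_cast n.factorial_pos)).trans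
      (pow_le_pow_left₀ hxt (by linarith [ht.1, hx.2]) n)
  rw [taylor_integral_remainder_Icc hab hf hx]
  calc |∫ t in a..x, (x - t) ^ n / n ! * D t|
      ≤ ∫ t in a..x, |(x - t) ^ n / n ! * D t| := abs_integral_le_integral_abs hx.1
    _ ≤ ∫ t in a..x, (b - a) ^ n * |D t| :=
        integral_mono_on hx.1 (ContinuousOn.intervalIntegrable (by fun_prop))
          (ContinuousOn.intervalIntegrable (by fun_prop)) fun t ht => by
          rw [abs_mul]; exact mul_le_mul_of_nonneg_right (hkernel t ht) (abs_nonneg _)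
    _ ≤ ∫ t in a..b, (b - a) ^ n * |D t| := by
        refine integral_mono_interval le_rfl hx.1 hx.2 ?_ ?_
        · exact Filter.Eventually.of_forall fun t => by positivity
        · exact ContinuousOn.intervalIntegrable (by rw [uIcc_of_le hab.le]; fun_prop)
    _ = (b - a) ^ n * ∫ t in a..b, |D t| := integral_const_mul _ _

theorem integral_mul_eval_eq_zero_of_integral_mul_pow_eq_zero {f : ℝ → ℝ} {a b : ℝ} {k : ℕ}
    (hf : IntervalIntegrable f MeasureTheory.volume a b)
    (h : ∀ j < k, ∫ x in a..b, f x * x ^ j = 0) {g : ℝ[X]} (hg : g.natDegree < k) :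
    ∫ x in a..b, f x * g.eval x = 0 := by
  have hexpand : ∀ x, f x * g.eval x = ∑ i ∈ Finset.range k, g.coeff i * (f x * x ^ i) :=
    fun x => by
      rw [eval_eq_sum_range' hg, Finset.mul_sum]
      exact Finset.sum_congr rfl fun i _ => by ring
  simp_rw [hexpand]
  rw [integral_finsetSum fun i _ => (hf.mul_continuousOn (by fun_prop)).const_mul (g.coeff i)]
  exact Finset.sum_eq_zero fun i hi => by
    rw [integral_const_mul, h i (Finset.mem_range.1 hi), mul_zero]

namespace Polynomial

theorem eq_zero_of_eval_zero_of_integral_mul_pow_eq_zero {q : ℝ[X]} {k : ℕ} (hq : q.natDegree ≤ k)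
    (h0 : q.eval 0 = 0) (h : ∀ j < k, ∫ t in (0 : ℝ)..1, q.eval t * t ^ j = 0) : q = 0 := by
  obtain ⟨Q, rfl⟩ : X ∣ q := X_dvd_iff.2 (by rwa [coeff_zero_eq_eval_zero])
  by_contra hne
  have hQ : Q ≠ 0 := by rintro rfl; simp at hne
  have hQk : Q.natDegree < k := by
    rw [natDegree_mul X_ne_zero hQ, natDegree_X] at hq; omega
  have horth := integral_mul_eval_eq_zero_of_integral_mul_pow_eq_zero
    ((X * Q).continuous.intervalIntegrable 0 1) h hQk
  obtain ⟨t₀, ht₀, hroot : Q.eval t₀ ≠ 0⟩ :=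
    ((Ioo_infinite zero_lt_one).sdiff (finite_setOfPred_isRoot hQ)).nonempty
  have hpos : 0 < ∫ t in (0 : ℝ)..1, (X * Q).eval t * Q.eval t := by
    simp only [eval_mul, eval_X, mul_assoc, ← sq]
    refine integral_pos zero_lt_one (by fun_prop) (fun t ht => by have := ht.1.le; positivity)
      ⟨t₀, Ioo_subset_Icc_self ht₀, mul_pos ht₀.1 (by positivity)⟩
  linarith

noncomputable def radauFunctionals (k : ℕ) : ℝ[X] →ₗ[ℝ] ℝ × (Fin k → ℝ) where
  toFun q := (q.eval 0, fun j => ∫ t in (0 : ℝ)..1, q.eval t * t ^ (j : ℕ))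
  map_add' p q := by
    ext j
    · simp
    · simp only [eval_add, add_mul, Pi.add_apply, Prod.snd_add]
      exact integral_add (Continuous.intervalIntegrable (by fun_prop) _ _)
        (Continuous.intervalIntegrable (by fun_prop) _ _)
  map_smul' r q := by
    ext j <;> simp [mul_assoc, integral_const_mul]

theorem exists_abs_eval_le_of_abs_integral_mul_pow_le (k : ℕ) :
    ∃ M > 0, ∀ q : ℝ[X], q.natDegree ≤ k → q.eval 0 = 0 → ∀ B, 0 ≤ B →
      (∀ j < k, |∫ t in (0 : ℝ)..1, q.eval t * t ^ j| ≤ B) →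
      ∀ t ∈ Icc (0 : ℝ) 1, |q.eval t| ≤ M * B := by
  let Φ := radauFunctionals k ∘ₗ (degreeLT ℝ (k + 1)).subtype ∘ₗ
    (degreeLTEquiv ℝ (k + 1)).symm.toLinearMap
  have hmem : ∀ q : ℝ[X], q ∈ degreeLT ℝ (k + 1) ↔ q.natDegree ≤ k := fun q => by
    rw [degreeLT_succ_eq_degreeLE, mem_degreeLE, natDegree_le_iff_degree_le]
  have hΦ : LinearMap.ker Φ = ⊥ := by
    refine LinearMap.ker_eq_bot'.2 fun v hv => ?_
    set q := (degreeLTEquiv ℝ (k + 1)).symm v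
    have hq0 : (q : ℝ[X]) = 0 := by
      obtain ⟨h0, hmom⟩ := Prod.ext_iff.1 hv
      exact eq_zero_of_eval_zero_of_integral_mul_pow_eq_zero ((hmem _).1 q.2) h0
        fun j hj => congrFun hmom ⟨j, hj⟩
    rw [← (degreeLTEquiv ℝ (k + 1)).apply_symm_apply v, ← map_zero (degreeLTEquiv ℝ (k + 1))]
    exact congrArg _ (Subtype.ext hq0)
  obtain ⟨K, hK, hΦK⟩ := Φ.exists_antilipschitzWith hΦ
  refine ⟨(k + 1) * K, by positivity, fun q hqk hq0 B hB hmom t ht => ?_⟩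
  have hq : q ∈ degreeLT ℝ (k + 1) := (hmem q).2 hqk
  set v := degreeLTEquiv ℝ (k + 1) ⟨q, hq⟩
  have hΦv : ‖Φ v‖ ≤ B := by
    have : Φ v = radauFunctionals k q := by simp [Φ, v]
    rw [this, Prod.norm_def, max_le_iff, pi_norm_le_iff_of_nonneg hB]
    exact ⟨by simpa [radauFunctionals, hq0] using hB, fun j => hmom j j.2⟩
  have hv : ‖v‖ ≤ K * B := (ZeroHomClass.bound_of_antilipschitz Φ hΦK v).trans (by gcongr)
  calc |q.eval t| = |∑ i, v i * t ^ (i : ℕ)| := by rw [eval_eq_sum_degreeLTEquiv hq]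
    _ ≤ ∑ _i : Fin (k + 1), ‖v‖ := by
      refine (Finset.abs_sum_le_sum_abs _ _).trans (Finset.sum_le_sum fun i _ => ?_)
      rw [abs_mul, abs_pow, abs_of_nonneg ht.1]
      exact (mul_le_of_le_one_right (abs_nonneg _) (pow_le_one₀ ht.1 ht.2)).trans
        (norm_le_pi_norm v i)
    _ ≤ (k + 1) * K * B := by
      simp only [Finset.sum_const, Finset.card_univ, Fintype.card_fin, nsmul_eq_mul]
      push_cast; rw [mul_assoc]; gcongr

theorem exists_abs_eval_le_of_abs_integral_mul_le (k : ℕ) :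
    ∃ M > 0, ∀ a b : ℝ, a < b → ∀ r : ℝ[X], r.natDegree ≤ k → r.eval a = 0 → ∀ B, 0 ≤ B →
      (∀ g : ℝ[X], g.natDegree < k → (∀ x ∈ Icc a b, |g.eval x| ≤ 1) →
        |∫ x in a..b, r.eval x * g.eval x| ≤ (b - a) * B) →
      ∀ x ∈ Icc a b, |r.eval x| ≤ M * B := by
  obtain ⟨M, hM, hunit⟩ := exists_abs_eval_le_of_abs_integral_mul_pow_le k
  refine ⟨M, hM, fun a b hab r hrk hra B hB hpair x hx => ?_⟩
  set h := b - a
  have hh : 0 < h := sub_pos.2 hab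
  have hq : ∀ t, (r.comp (C h * X + C a)).eval t = r.eval (h * t + a) := fun t => by simp
  have hunscale : ∀ y ∈ Icc a b, (y - a) / h ∈ Icc (0 : ℝ) 1 := fun y hy =>
    ⟨div_nonneg (sub_nonneg.2 hy.1) hh.le, (div_le_one hh).2 (by linarith [hy.2])⟩
  have hmom : ∀ j < k, |∫ t in (0 : ℝ)..1, (r.comp (C h * X + C a)).eval t * t ^ j| ≤ B := by
    intro j hj
    set g := (C h⁻¹ * (X - C a)) ^ j
    have hg : ∀ y, g.eval y = ((y - a) / h) ^ j := fun y => by simp [g, div_eq_inv_mul]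
    have hgk : g.natDegree < k :=
      (natDegree_pow_le_of_le j ((natDegree_C_mul_le _ _).trans (natDegree_X_sub_C_le a))).trans_lt
        (by simpa using hj)
    have hg1 : ∀ y ∈ Icc a b, |g.eval y| ≤ 1 := fun y hy => by
      rw [hg, abs_pow, abs_of_nonneg (hunscale y hy).1]
      exact pow_le_one₀ (hunscale y hy).1 (hunscale y hy).2
    have hscale : ∫ t in (0 : ℝ)..1, (r.comp (C h * X + C a)).eval t * t ^ j
        = h⁻¹ * ∫ y in a..b, r.eval y * g.eval y := by
      calc ∫ t in (0 : ℝ)..1, (r.comp (C h * X + C a)).eval t * t ^ j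
          = ∫ t in (0 : ℝ)..1, (fun y => r.eval y * g.eval y) (h * t + a) :=
            integral_congr fun t _ => by simp only [hq, hg, add_sub_cancel_right,
              mul_div_cancel_left₀ _ hh.ne']
        _ = h⁻¹ * ∫ y in a..b, r.eval y * g.eval y := by
            rw [integral_comp_mul_add (fun y => r.eval y * g.eval y) hh.ne' a, smul_eq_mul,
              mul_zero, zero_add, mul_one, show h + a = b by simp [h]]
    rw [hscale, abs_mul, abs_of_pos (inv_pos.2 hh)]
    calc h⁻¹ * |∫ y in a..b, r.eval y * g.eval y| ≤ h⁻¹ * (h * B) := by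
          gcongr; exact hpair g hgk hg1
      _ = B := inv_mul_cancel_left₀ hh.ne' B
  have := hunit _ ((natDegree_comp_le).trans ?_) (by simp [hq, hra]) B hB hmom _ (hunscale x hx)
  · rwa [hq, mul_div_cancel₀ _ hh.ne', sub_add_cancel] at this
  · simpa using Nat.mul_le_mul hrk (natDegree_linear_le (a := h) (b := a))

end Polynomial

theorem exists_abs_sub_radau_le (k : ℕ) :
    ∃ M > 0, ∀ a c : ℝ, a < c → ∀ u : ℝ → ℝ, ContDiffOn ℝ (k + 1) u (Icc a c) →
      ∀ p : ℝ[X], p.natDegree ≤ k → p.eval a = u a →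
      (∀ j < k, ∫ s in a..c, (u s - p.eval s) * s ^ j = 0) →
      ∀ s ∈ Icc a c, |u s - p.eval s|
        ≤ M * ((c - a) ^ k * ∫ t in a..c, |iteratedDerivWithin (k + 1) u (Icc a c) t|) := by
  obtain ⟨M, hM, hstab⟩ := exists_abs_eval_le_of_abs_integral_mul_le k
  refine ⟨1 + M, by positivity, fun a c hac u hu p hpk hpa horth s hs => ?_⟩
  set B := (c - a) ^ k * ∫ t in a..c, |iteratedDerivWithin (k + 1) u (Icc a c) t|
  obtain ⟨T, hTk, hT⟩ := exists_polynomial_eval_eq_taylorWithinEval u k (Icc a c) a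
  have hTu : ∀ x ∈ Icc a c, |u x - T.eval x| ≤ B := fun x hx =>
    hT x ▸ abs_sub_taylorWithinEval_le hac hu hx
  have hB : 0 ≤ B := (abs_nonneg _).trans (hTu a (left_mem_Icc.2 hac.le))
  have hcont : ∀ q : ℝ[X], ContinuousOn (fun x => u x - q.eval x) (uIcc a c) := fun q => by
    rw [uIcc_of_le hac.le]; exact hu.continuousOn.sub q.continuousOn
  have hpair : ∀ g : ℝ[X], g.natDegree < k → (∀ x ∈ Icc a c, |g.eval x| ≤ 1) →
      |∫ x in a..c, (T - p).eval x * g.eval x| ≤ (c - a) * B := by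
    intro g hgk hg1
    have horth_g := integral_mul_eval_eq_zero_of_integral_mul_pow_eq_zero
      (hcont p).intervalIntegrable horth hgk
    have hsplit : ∫ x in a..c, (T - p).eval x * g.eval x
        = ∫ x in a..c, (u x - p.eval x) * g.eval x - (u x - T.eval x) * g.eval x :=
      integral_congr fun x _ => by simp only [eval_sub]; ring
    have hint : ∀ q : ℝ[X],
        IntervalIntegrable (fun x => (u x - q.eval x) * g.eval x) MeasureTheory.volume a c :=
      fun q => ((hcont q).mul g.continuousOn).intervalIntegrable
    rw [hsplit, integral_sub (hint p) (hint T), horth_g, zero_sub, abs_neg]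
    exact abs_integral_mul_le_of_abs_le hac.le hTu hg1
  have hr := hstab a c hac (T - p) ((natDegree_sub_le _ _).trans (max_le hTk hpk))
    (by simp [hT, taylorWithinEval_self, hpa]) B hB hpair s hs
  calc |u s - p.eval s| = |(u s - T.eval s) + (T - p).eval s| := by simp
    _ ≤ B + M * B := (abs_add_le _ _).trans (add_le_add (hTu s hs) hr)
    _ = (1 + M) * B := by ring

/-- Optimal approximation estimate for the Gauss--Radau projection:
`‖u - Πu‖_{L²(a,c)} ≤ C h^{k+1} ‖u^{(k+1)}‖_{L²(a,c)}` with `h = c - a`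
and `C` depending only on `k`. -/
theorem stmt16 (k : ℕ) :
    ∃ C : ℝ, 0 < C ∧
      ∀ a c : ℝ, a < c →
        ∀ u : ℝ → ℝ, ContDiffOn ℝ (k + 1) u (Set.Icc a c) →
          ∀ p : Polynomial ℝ, p.natDegree ≤ k → p.eval a = u a →
            (∀ j < k, (∫ s in a..c, (u s - p.eval s) * s ^ j) = 0) →
            Real.sqrt (∫ s in a..c, (u s - p.eval s) ^ 2)
              ≤ C * (c - a) ^ (k + 1) *
                Real.sqrt (∫ s in a..c,
                  (iteratedDerivWithin (k + 1) u (Set.Icc a c) s) ^ 2) := by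
  obtain ⟨M, hM, hsup⟩ := exists_abs_sub_radau_le k
  refine ⟨M, hM, fun a c hac u hu p hpk hpa horth => ?_⟩
  set D := iteratedDerivWithin (k + 1) u (Icc a c)
  have hCS := sq_integral_abs_le hac.le
    (hu.continuousOn_iteratedDerivWithin le_rfl (uniqueDiffOn_Icc hac))
  have hL2 := integral_sq_le_of_abs_le hac.le (hsup a c hac u hu p hpk hpa horth)
  have hh : 0 ≤ c - a := sub_nonneg.2 hac.le
  calc √(∫ s in a..c, (u s - p.eval s) ^ 2)
      ≤ √((M * (c - a) ^ (k + 1)) ^ 2 * ∫ s in a..c, D s ^ 2) := by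
        refine Real.sqrt_le_sqrt (hL2.trans ?_)
        calc (c - a) * (M * ((c - a) ^ k * ∫ t in a..c, |D t|)) ^ 2
            = (M * (c - a) ^ k) ^ 2 * (∫ t in a..c, |D t|) ^ 2 * (c - a) := by ring
          _ ≤ (M * (c - a) ^ k) ^ 2 * ((c - a) * ∫ t in a..c, D t ^ 2) * (c - a) := by gcongr
          _ = (M * (c - a) ^ (k + 1)) ^ 2 * ∫ s in a..c, D s ^ 2 := by ring
    _ = M * (c - a) ^ (k + 1) * √(∫ s in a..c, D s ^ 2) := by
        rw [Real.sqrt_mul (sq_nonneg _), Real.sqrt_sq (by positivity)]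
end
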